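/- Let G be a simple graph with a proper edge coloring α, let u be a vertex, and let X_u(α,v) = (ux_0,...,ux_p) be an α-fan at u that forms a path in the fan digraph D_u(α) (i.e., the color m_α(x_p) is missing at u). Then the colorings α and X_u^{-1}(α,v) are Kempe-equivalent, where X_u^{-1}(α,v) recolors each edge ux_i with m_α(x_i). -/

import Mathlib

/-!
Recolor the fan edges from the last one backwards. When `u x_i` is recolored, `m i` is missing
at `x i`, and also at `u`: for `i = p` by hypothesis, and for `i < p` because `u x_{i+1}`, the
only edge at `u` of color `α (u x_{i+1}) = m i`, has just been recolored. So the component of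
`K(α (u x_i), m i)` through `u` is the single edge `u x_i`, and recoloring it is a Kempe change.
-/

open SimpleGraph

/-- A proper edge coloring: edges of `G` sharing a vertex get different colors. -/
def IsProperEdgeColoring {V : Type*} (G : SimpleGraph V) {t : ℕ} (c : Sym2 V → Fin t) : Prop :=
  ∀ e₁ ∈ G.edgeSet, ∀ e₂ ∈ G.edgeSet, e₁ ≠ e₂ → (∃ v, v ∈ e₁ ∧ v ∈ e₂) → c e₁ ≠ c e₂

/-- The chromatic index: least number of colors in a proper edge coloring. -/
noncomputable def chromaticIndex {V : Type*} (G : SimpleGraph V) : ℕ :=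
  sInf {t | ∃ c : Sym2 V → Fin t, IsProperEdgeColoring G c}

/-- Color `c` is missing at vertex `w` under coloring `α`. -/
def MissingAt {V : Type*} (G : SimpleGraph V) {t : ℕ} (α : Sym2 V → Fin t) (c : Fin t)
    (w : V) : Prop :=
  ∀ e ∈ G.edgeSet, w ∈ e → α e ≠ c

/-- The subgraph `K_α(a,b)` induced by the edges colored `a` or `b`. -/
def bicolored {V : Type*} (G : SimpleGraph V) {t : ℕ} (α : Sym2 V → Fin t) (a b : Fin t) :
    SimpleGraph V :=
  SimpleGraph.fromEdgeSet {e | e ∈ G.edgeSet ∧ (α e = a ∨ α e = b)}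

/-- `β` is obtained from `α` by a single Kempe change: swapping two colors `a`, `b` on a
connected component of the bicolored subgraph `K_α(a,b)`. -/
def IsKempeSwap {V : Type*} (G : SimpleGraph V) {t : ℕ} (α β : Sym2 V → Fin t) : Prop :=
  ∃ a b : Fin t, ∃ C : (bicolored G α a b).ConnectedComponent,
    (∀ e ∈ G.edgeSet, (α e = a ∨ α e = b) →
      (∀ v ∈ e, (bicolored G α a b).connectedComponentMk v = C) →
      ((α e = a ∧ β e = b) ∨ (α e = b ∧ β e = a))) ∧
    (∀ e : Sym2 V, (e ∉ G.edgeSet ∨ (α e ≠ a ∧ α e ≠ b) ∨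
        ∃ v ∈ e, (bicolored G α a b).connectedComponentMk v ≠ C) → β e = α e)

/-- Kempe equivalence: reachability by a sequence of Kempe changes. -/
def KempeEquiv {V : Type*} (G : SimpleGraph V) {t : ℕ} (α β : Sym2 V → Fin t) : Prop :=
  Relation.ReflTransGen (IsKempeSwap G) α β

/-- `G` is chordless: in every cycle, any two nonconsecutive vertices are nonadjacent. -/
def Chordless {V : Type*} (G : SimpleGraph V) : Prop :=
  ∀ n : ℕ, 3 ≤ n → ∀ c : ZMod n → V, Function.Injective c →
    (∀ i, G.Adj (c i) (c (i + 1))) →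
    ∀ i j : ZMod n, j ≠ i → j ≠ i + 1 → i ≠ j + 1 → ¬ G.Adj (c i) (c j)

/-- An `α`-fan at `u`: edges `u x₀, …, u xₚ` with `m i` a color missing at `x i`
and `α (u x_{i+1}) = m i`. -/
structure IsFan {V : Type*} (G : SimpleGraph V) {t : ℕ} (α : Sym2 V → Fin t)
    (u : V) (p : ℕ) (x : ℕ → V) (m : ℕ → Fin t) : Prop where
  adj : ∀ i ≤ p, G.Adj u (x i)
  inj : ∀ i ≤ p, ∀ j ≤ p, x i = x j → i = j
  missing : ∀ i ≤ p, MissingAt G α (m i) (x i)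
  succ : ∀ i < p, α s(u, x (i + 1)) = m i

/-- The coloring `X_u^{-1}(α,v)`: each fan edge `u xᵢ` is recolored with `m i`,
all other edges keep their color. -/
def IsFanRecolor {V : Type*} {t : ℕ} (α : Sym2 V → Fin t)
    (u : V) (p : ℕ) (x : ℕ → V) (m : ℕ → Fin t) (β : Sym2 V → Fin t) : Prop :=
  (∀ i ≤ p, β s(u, x i) = m i) ∧ (∀ e : Sym2 V, (∀ i ≤ p, e ≠ s(u, x i)) → β e = α e)

/-- A cycle fan is saturated if for every `i` the component of `K_α(α(u xᵢ), m_α(u))`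
containing `u` also contains `x_{i-1}` (cyclically). -/
def SaturatedCycleFan {V : Type*} (G : SimpleGraph V) {t : ℕ} (α : Sym2 V → Fin t)
    (u : V) (p : ℕ) (x : ℕ → V) (mu : Fin t) : Prop :=
  ∀ i ≤ p, (bicolored G α (α s(u, x i)) mu).connectedComponentMk u =
    (bicolored G α (α s(u, x i)) mu).connectedComponentMk (x (if i = 0 then p else i - 1))

section

variable {V : Type*} {G : SimpleGraph V} {t : ℕ} {α : Sym2 V → Fin t}

theorem bicolored_adj {a b : Fin t} {v w : V} :
    (bicolored G α a b).Adj v w ↔ G.Adj v w ∧ (α s(v, w) = a ∨ α s(v, w) = b) :=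
  ⟨fun ⟨⟨h, c⟩, _⟩ => ⟨h, c⟩, fun ⟨h, c⟩ => ⟨⟨h, c⟩, h.ne⟩⟩

theorem IsProperEdgeColoring.eq_of_color_eq (hα : IsProperEdgeColoring G α) {u v w : V}
    (hv : G.Adj u v) (hw : G.Adj u w) (h : α s(u, v) = α s(u, w)) : v = w := by
  by_contra hne
  exact hα _ hv _ hw (mt Sym2.congr_right.mp hne) ⟨u, by simp, by simp⟩ h

theorem IsProperEdgeColoring.eq_of_bicolored_adj (hα : IsProperEdgeColoring G α) {u w y : V}
    (huw : G.Adj u w) {b : Fin t} (hu : MissingAt G α b u)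
    (h : (bicolored G α (α s(u, w)) b).Adj u y) : y = w := by
  obtain ⟨huy, hc | hc⟩ := bicolored_adj.mp h
  · exact hα.eq_of_color_eq huy huw hc
  · exact absurd hc (hu _ huy (by simp))

theorem IsProperEdgeColoring.reachable_bicolored_of_missing (hα : IsProperEdgeColoring G α)
    {u w y : V} (huw : G.Adj u w) {b : Fin t} (hu : MissingAt G α b u) (hw : MissingAt G α b w)
    (hy : (bicolored G α (α s(u, w)) b).Reachable u y) : y = u ∨ y = w := by
  have hwu : bicolored G α (α s(w, u)) b = bicolored G α (α s(u, w)) b := by rw [Sym2.eq_swap]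
  replace hy := (reachable_iff_reflTransGen u y).mp hy
  induction hy with
  | refl => exact .inl rfl
  | tail _ hadj ih =>
    rcases ih with rfl | rfl
    · exact .inr (hα.eq_of_bicolored_adj huw hu hadj)
    · exact .inl (hα.eq_of_bicolored_adj huw.symm hw (hwu ▸ hadj))

variable [DecidableEq V]

theorem IsProperEdgeColoring.isKempeSwap_update (hα : IsProperEdgeColoring G α) {u w : V}
    (huw : G.Adj u w) {b : Fin t} (hu : MissingAt G α b u) (hw : MissingAt G α b w) :
    IsKempeSwap G α (Function.update α s(u, w) b) := by
  set K := bicolored G α (α s(u, w)) b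
  have hreach : ∀ {y}, K.connectedComponentMk y = K.connectedComponentMk u → y = u ∨ y = w :=
    fun hy => hα.reachable_bicolored_of_missing huw hu hw (ConnectedComponent.eq.mp hy).symm
  refine ⟨α s(u, w), b, K.connectedComponentMk u, ?_, ?_⟩
  · intro e he _ hC
    suffices e = s(u, w) by subst this; exact .inl ⟨rfl, Function.update_self ..⟩
    induction e using Sym2.ind with
    | _ y z =>
      have hyz : y ≠ z := (G.mem_edgeSet.mp he).ne
      rcases hreach (hC y (by simp)) with rfl | rfl <;>
        rcases hreach (hC z (by simp)) with rfl | rfl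
      all_goals first | exact absurd rfl hyz | rfl | exact Sym2.eq_swap
  · rintro e hcase
    refine Function.update_of_ne ?_ _ _
    rintro rfl
    rcases hcase with hnot | hcolor | ⟨v, hv, hvC⟩
    · exact hnot huw
    · exact hcolor.1 rfl
    · rcases Sym2.mem_iff.mp hv with rfl | rfl
      · exact hvC rfl
      · have : K.Adj v u := bicolored_adj.mpr ⟨huw.symm, .inl (congrArg α Sym2.eq_swap)⟩
        exact hvC (ConnectedComponent.eq.mpr this.reachable)

theorem IsProperEdgeColoring.update (hα : IsProperEdgeColoring G α) {u w : V} {b : Fin t}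
    (hu : MissingAt G α b u) (hw : MissingAt G α b w) :
    IsProperEdgeColoring G (Function.update α s(u, w) b) := by
  have hmiss : ∀ e ∈ G.edgeSet, ∀ v ∈ s(u, w), v ∈ e → α e ≠ b := by
    intro e he v hv hve
    rcases Sym2.mem_iff.mp hv with rfl | rfl
    exacts [hu _ he hve, hw _ he hve]
  intro e₁ h₁ e₂ h₂ hne ⟨v, hv₁, hv₂⟩
  by_cases he₁ : e₁ = s(u, w) <;> by_cases he₂ : e₂ = s(u, w)
  · exact absurd (he₁.trans he₂.symm) hne
  · subst he₁
    rw [Function.update_self, Function.update_of_ne he₂]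
    exact (hmiss e₂ h₂ v hv₁ hv₂).symm
  · subst he₂
    rw [Function.update_self, Function.update_of_ne he₁]
    exact hmiss e₁ h₁ v hv₂ hv₁
  · rw [Function.update_of_ne he₁, Function.update_of_ne he₂]
    exact hα e₁ h₁ e₂ h₂ hne ⟨v, hv₁, hv₂⟩

theorem MissingAt.update_of_notMem {c b : Fin t} {z u w : V} (hz : MissingAt G α c z)
    (hzuw : z ∉ s(u, w)) : MissingAt G (Function.update α s(u, w) b) c z := by
  intro e he hze
  rw [Function.update_of_ne (by rintro rfl; exact hzuw hze)]
  exact hz e he hze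

theorem IsProperEdgeColoring.missingAt_update (hα : IsProperEdgeColoring G α) {u w : V}
    (huw : G.Adj u w) {b : Fin t} (hw : MissingAt G α b w) :
    MissingAt G (Function.update α s(u, w) b) (α s(u, w)) u := by
  intro e he hue
  by_cases h : e = s(u, w)
  · subst h
    rw [Function.update_self]
    exact (hw _ huw (by simp)).symm
  · rw [Function.update_of_ne h]
    exact hα e he _ huw h ⟨u, hue, by simp⟩

variable {u : V} {n : ℕ} {x : ℕ → V} {m : ℕ → Fin t}

theorem IsFan.update_last (hfan : IsFan G α u (n + 1) x m) :
    IsFan G (Function.update α s(u, x (n + 1)) (m (n + 1))) u n x m := by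
  have hx_ne : ∀ i ≤ n, x i ≠ x (n + 1) := fun i hi h => by
    have := hfan.inj i (by omega) (n + 1) le_rfl h
    omega
  refine ⟨fun i hi => hfan.adj i (by omega), fun i hi j hj => hfan.inj i (by omega) j (by omega),
    fun i hi => ?_, fun i hi => ?_⟩
  · refine (hfan.missing i (by omega)).update_of_notMem ?_
    rw [Sym2.mem_iff, not_or]
    exact ⟨(hfan.adj i (by omega)).ne', hx_ne i hi⟩
  · rw [Function.update_of_ne (mt Sym2.congr_right.mp (hx_ne (i + 1) hi))]
    exact hfan.succ i (by omega)

variable {β : Sym2 V → Fin t}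

theorem IsFanRecolor.update_last (hβ : IsFanRecolor α u (n + 1) x m β) :
    IsFanRecolor (Function.update α s(u, x (n + 1)) (m (n + 1))) u n x m β := by
  refine ⟨fun i hi => hβ.1 i (by omega), fun e he => ?_⟩
  by_cases h : e = s(u, x (n + 1))
  · rw [h, Function.update_self, hβ.1 (n + 1) le_rfl]
  · rw [Function.update_of_ne h]
    refine hβ.2 e fun i hi => ?_
    rcases Nat.le_succ_iff.mp hi with hi | rfl
    exacts [he i hi, h]

theorem IsFanRecolor.eq_update_of_zero (hβ : IsFanRecolor α u 0 x m β) :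
    β = Function.update α s(u, x 0) (m 0) := by
  funext e
  by_cases h : e = s(u, x 0)
  · rw [h, Function.update_self, hβ.1 0 le_rfl]
  · rw [Function.update_of_ne h]
    exact hβ.2 e fun i hi => by rwa [Nat.le_zero.mp hi]

end

/-- Lemma 2.1: if the fan `X_u(α,v)` is a path, then `α` and `X_u^{-1}(α,v)` are
Kempe-equivalent. -/
theorem stmt5 {V : Type*} (G : SimpleGraph V) {t : ℕ} (α : Sym2 V → Fin t)
    (hα : IsProperEdgeColoring G α) (u : V) (p : ℕ) (x : ℕ → V) (m : ℕ → Fin t)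
    (hfan : IsFan G α u p x m) (hpath : MissingAt G α (m p) u)
    (β : Sym2 V → Fin t) (hβ : IsFanRecolor α u p x m β) :
    KempeEquiv G α β := by
  classical
  induction p generalizing α with
  | zero =>
    rw [hβ.eq_update_of_zero]
    exact .single (hα.isKempeSwap_update (hfan.adj 0 le_rfl) hpath (hfan.missing 0 le_rfl))
  | succ n ih =>
    have hlast := hfan.adj (n + 1) le_rfl
    have hmiss := hfan.missing (n + 1) le_rfl
    have hfreed : α s(u, x (n + 1)) = m n := hfan.succ n n.lt_succ_self
    refine .head (hα.isKempeSwap_update hlast hpath hmiss) (ih _ (hα.update hpath hmiss)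
      hfan.update_last ?_ hβ.update_last)
    exact hfreed ▸ hα.missingAt_update hlast hmiss
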